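/- arXiv:2010.05283 — 3 statements merged into one kernel-verified Lean document; each statement's English description precedes it below -/
import Mathlib

section
/- Let a(T) = T^n over a field F and r, n ≥ 1. Then f_a(T_1,…,T_r) = Σ_{0 ≤ j_1,…,j_r ≤ n-1, j_1+⋯+j_r = (r-1)(n-1)} T_1^{j_1}⋯T_r^{j_r}. That is, f_{T^n} is the sum of all monomials in T_1,…,T_r with each exponent at most n-1 and total degree (r-1)(n-1). -/
/-!
With all roots zero, the `j`-th factor of the term of a chain `0 = c₀ ≤ ⋯ ≤ c_r = n - 1` is
`T_j` raised to the number of indices outside `[c_{j-1}, c_j]`, i.e. to `(n - 1) - g_j` where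
`g_j = c_j - c_{j-1}`. Taking gaps and partial sums identifies chains with vectors `g ∈ ℕ^r`
summing to `n - 1`, and `g ↦ (n - 1 - g_j)_j` maps these onto the exponent vectors with entries
at most `n - 1` summing to `(r - 1)(n - 1)`.
-/

/-- The polynomial `f_a` attached to a monic polynomial `a` of degree `n`
with roots `α 0, …, α (n-1)` (with multiplicity):
`f_a(T_1,…,T_r) = Σ_{1=i_0 ≤ i_1 ≤ ⋯ ≤ i_r = n} ∏_{j=1}^r ∏_{i ∉ [i_{j-1}, i_j]} (T_j - α_i)`. -/
noncomputable def fa (F : Type*) [CommRing F] (r n : ℕ) (α : Fin n → F) :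
    MvPolynomial (Fin r) F :=
  ∑ c ∈ Finset.univ.filter (fun c : Fin (r + 1) → Fin n =>
      (∀ i j, i ≤ j → c i ≤ c j) ∧ (c 0 : ℕ) = 0 ∧ (c (Fin.last r) : ℕ) = n - 1),
    ∏ j : Fin r,
      ∏ i ∈ Finset.univ.filter (fun i : Fin n =>
          ¬(c (Fin.castSucc j) ≤ i ∧ i ≤ c (Fin.succ j))),
        (MvPolynomial.X j - MvPolynomial.C (α i))

open Finset MvPolynomial

namespace Fin

theorem partialSum_last {M : Type*} [AddCommMonoid M] {n : ℕ} (f : Fin n → M) :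
    partialSum f (last n) = ∑ i, f i := by
  simp [partialSum, List.take_of_length_le, List.sum_ofFn]

theorem monotone_partialSum {M : Type*} [AddMonoid M] [PartialOrder M] [CanonicallyOrderedAdd M]
    {n : ℕ} (f : Fin n → M) : Monotone (partialSum f) :=
  monotone_iff_le_succ.2 fun i => by rw [partialSum_succ]; exact le_self_add

theorem partialSum_le_sum {n : ℕ} (f : Fin n → ℕ) (k : Fin (n + 1)) :
    partialSum f k ≤ ∑ i, f i :=
  partialSum_last f ▸ monotone_partialSum f (le_last k)

theorem partialSum_succ_sub_castSucc {n : ℕ} (f : Fin n → ℕ) (j : Fin n) :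
    partialSum f j.succ - partialSum f j.castSucc = f j := by
  rw [partialSum_succ, Nat.add_sub_cancel_left]

theorem partialSum_succ_sub_castSucc_of_monotone {n : ℕ} {v : Fin (n + 1) → ℕ}
    (hv : Monotone v) (k : Fin (n + 1)) :
    partialSum (fun j => v j.succ - v j.castSucc) k = v k - v 0 := by
  induction k using Fin.inductionOn with
  | zero => simp
  | succ j ih =>
    have h0 : v 0 ≤ v j.castSucc := hv (zero_le _)
    have hj : v j.castSucc ≤ v j.succ := hv (castSucc_le_succ j)
    rw [partialSum_succ, ih]
    omega

theorem card_filter_notMem_Icc {N : ℕ} {a b : Fin (N + 1)} (hab : a ≤ b) :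
    #{i | ¬(a ≤ i ∧ i ≤ b)} = N - ((b : ℕ) - a) := by
  have hcompl : ({i | ¬(a ≤ i ∧ i ≤ b)} : Finset (Fin (N + 1))) = (Icc a b)ᶜ := by
    ext; simp
  have hab' : (a : ℕ) ≤ b := hab
  rw [hcompl, card_compl, card_Icc, Fintype.card_fin]
  omega

end Fin

def monotoneChains (r N : ℕ) : Finset (Fin (r + 1) → Fin (N + 1)) :=
  {c | (∀ i j, i ≤ j → c i ≤ c j) ∧ c 0 = 0 ∧ c (Fin.last r) = Fin.last N}

theorem mem_monotoneChains {r N : ℕ} {c : Fin (r + 1) → Fin (N + 1)} :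
    c ∈ monotoneChains r N ↔
      (∀ i j, i ≤ j → c i ≤ c j) ∧ c 0 = 0 ∧ c (Fin.last r) = Fin.last N := by
  simp [monotoneChains]

theorem fa_zero_eq_sum_monotoneChains (F : Type*) [CommRing F] (r N : ℕ) :
    fa F r (N + 1) (fun _ => 0) =
      ∑ c ∈ monotoneChains r N, ∏ j, X j ^ (N - ((c j.succ : ℕ) - c j.castSucc)) := by
  refine sum_congr ?_ fun c hc => prod_congr rfl fun j _ => ?_
  · ext c
    simp only [mem_filter, mem_univ, true_and, mem_monotoneChains, Fin.ext_iff, Fin.val_zero,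
      Fin.val_last, Nat.add_sub_cancel]
  simp only [map_zero, sub_zero, prod_const]
  rw [Fin.card_filter_notMem_Icc ((mem_monotoneChains.1 hc).1 _ _ (Fin.castSucc_le_succ j))]

theorem sum_monotoneChains_eq_sum_antidiagonalTuple {M : Type*} [AddCommMonoid M] (r N : ℕ)
    (φ : (Fin r → ℕ) → M) :
    ∑ c ∈ monotoneChains r N, φ (fun j => (c j.succ : ℕ) - c j.castSucc) =
      ∑ g ∈ Nat.antidiagonalTuple r N, φ g := by
  refine sum_bij' (fun c _ j => (c j.succ : ℕ) - c j.castSucc)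
    (fun g hg k => ⟨Fin.partialSum g k, Nat.lt_succ_of_le <|
      Nat.mem_antidiagonalTuple.1 hg ▸ Fin.partialSum_le_sum g k⟩) ?_ ?_ ?_ ?_ fun _ _ => rfl
  · intro c hc
    obtain ⟨hmono, h0, hlast⟩ := mem_monotoneChains.1 hc
    rw [Nat.mem_antidiagonalTuple, ← Fin.partialSum_last,
      Fin.partialSum_succ_sub_castSucc_of_monotone (fun i j h => hmono i j h), hlast, h0]
    simp
  · intro g hg
    refine mem_monotoneChains.2 ⟨fun i j h => Fin.monotone_partialSum g h, ?_, ?_⟩ <;>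
      ext <;> simp [Fin.partialSum_last, Nat.mem_antidiagonalTuple.1 hg]
  · intro c hc
    obtain ⟨hmono, h0, -⟩ := mem_monotoneChains.1 hc
    ext k
    simp [Fin.partialSum_succ_sub_castSucc_of_monotone (fun i j h => hmono i j h), h0]
  · intro g _
    ext j
    exact Fin.partialSum_succ_sub_castSucc g j

theorem sum_antidiagonalTuple_comp_tsub {M : Type*} [AddCommMonoid M] {r : ℕ} (hr : 1 ≤ r)
    (N : ℕ) (φ : (Fin r → ℕ) → M) :
    ∑ g ∈ Nat.antidiagonalTuple r N, φ (fun j => N - g j) =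
      ∑ d ∈ univ.filter (fun d : Fin r → Fin (N + 1) => ∑ i, (d i : ℕ) = (r - 1) * N),
        φ (fun j => d j) := by
  have hle {g : Fin r → ℕ} (hg : g ∈ Nat.antidiagonalTuple r N) (j : Fin r) : g j ≤ N :=
    Nat.mem_antidiagonalTuple.1 hg ▸ single_le_sum (fun _ _ => Nat.zero_le _) (mem_univ j)
  refine sum_nbij' (fun g j => ⟨N - g j, Nat.lt_succ_of_le (Nat.sub_le _ _)⟩)
    (fun d j => N - d j) ?_ ?_ ?_ ?_ fun _ _ => rfl
  · intro g hg
    simp only [mem_filter, mem_univ, true_and]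
    rw [sum_tsub_distrib _ fun j _ => hle hg j, Nat.mem_antidiagonalTuple.1 hg, sum_const,
      card_univ, Fintype.card_fin, smul_eq_mul, Nat.sub_one_mul]
  · intro d hd
    simp only [mem_filter, mem_univ, true_and] at hd
    rw [Nat.mem_antidiagonalTuple, sum_tsub_distrib _ fun j _ => Nat.le_of_lt_succ (d j).isLt,
      hd, sum_const, card_univ, Fintype.card_fin, smul_eq_mul, Nat.sub_one_mul,
      Nat.sub_sub_self (Nat.le_mul_of_pos_left N hr)]
  · intro g hg
    ext j
    simp [Nat.sub_sub_self (hle hg j)]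
  · intro d _
    ext j
    simp [Nat.sub_sub_self (Nat.le_of_lt_succ (d j).isLt)]

theorem fa_of_Tpow (F : Type*) [Field F] (r n : ℕ) (hr : 1 ≤ r) (hn : 1 ≤ n) :
    fa F r n (fun _ => (0 : F)) =
      ∑ d ∈ Finset.univ.filter (fun d : Fin r → Fin n =>
          ∑ i, (d i : ℕ) = (r - 1) * (n - 1)),
        ∏ i, MvPolynomial.X i ^ (d i : ℕ) := by
  obtain ⟨N, rfl⟩ := Nat.exists_eq_add_of_le' hn
  rw [Nat.add_sub_cancel, fa_zero_eq_sum_monotoneChains,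
    sum_monotoneChains_eq_sum_antidiagonalTuple r N fun g => ∏ j, X j ^ (N - g j)]
  exact sum_antidiagonalTuple_comp_tsub hr N fun e => ∏ j, X j ^ e j
end

section
/- Let a be a monic polynomial of degree n ≥ 1 with roots α_1,…,α_n over an algebraically closed field, r ≥ 1, and let I be the ideal of F[T_1,…,T_r] generated by a(T_1),…,a(T_r). Define f_{a/(T-α_1)} using the roots α_2,…,α_n. Then for every l ∈ {1,…,r}: (T_l - α_1)·f_a(T_1,…,T_r) ≡ (∏_{j=1}^r (T_j - α_1))·f_{a/(T-α_1)}(T_1,…,T_r) (mod I). -/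
open Finset MvPolynomial

namespace Matrix

variable {ι S : Type*} [Fintype ι] [DecidableEq ι] [CommSemiring S]

theorem list_prod_ofFn_apply {r : ℕ} (M : Fin r → Matrix ι ι S) (a b : ι) :
    (List.ofFn M).prod a b =
      ∑ c ∈ univ.filter (fun c : Fin (r + 1) → ι => c 0 = a ∧ c (Fin.last r) = b),
        ∏ j, M j (c j.castSucc) (c j.succ) := by
  induction r generalizing a with
  | zero =>
    rw [sum_filter, ← (Equiv.funUnique (Fin 1) ι).symm.sum_comp]
    simp only [List.ofFn_zero, List.prod_nil, one_apply, eq_comm, Equiv.funUnique_symm_apply,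
      uniqueElim_const, Fin.last_zero, univ_eq_empty, prod_empty, ite_and, sum_ite_eq, mem_univ,
      ↓reduceIte]
  | succ r ih =>
    rw [List.ofFn_succ, List.prod_cons, mul_apply, sum_filter,
      ← (Fin.consEquiv fun _ => ι).sum_comp, Fintype.sum_prod_type]
    simp only [ih, sum_filter, mul_sum, mul_ite, mul_zero, Fin.consEquiv, Equiv.coe_fn_mk,
      Fin.cons_zero, ← Fin.succ_last, Fin.cons_succ, Fin.prod_univ_succ, Fin.castSucc_zero,
      Fin.castSucc_succ]
    conv_lhs => rw [sum_comm]
    simp only [ite_and, sum_ite_eq, mem_univ, ↓reduceIte, sum_ite_irrel, sum_const_zero,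
      sum_ite_eq']

end Matrix

section TransferMatrix

variable {R : Type*} [CommRing R] {n : ℕ}

noncomputable def transferMatrix (α : Fin n → R) (x : R) : Matrix (Fin n) (Fin n) R :=
  Matrix.of fun p q =>
    if p ≤ q then ∏ i ∈ univ.filter (fun i => ¬(p ≤ i ∧ i ≤ q)), (x - α i) else 0

noncomputable def transferProd {r : ℕ} (α : Fin n → R) (x : Fin r → R) :
    Matrix (Fin n) (Fin n) R :=
  (List.ofFn fun j => transferMatrix α (x j)).prod

theorem transferProd_succ {r : ℕ} (α : Fin n → R) (x : Fin (r + 1) → R) :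
    transferProd α x = transferMatrix α (x 0) * transferProd α (Fin.tail x) := by
  rw [transferProd, List.ofFn_succ, List.prod_cons]
  rfl

theorem map_transferProd_apply {S : Type*} [CommRing S] (f : R →+* S) {r : ℕ} (α : Fin n → R)
    (x : Fin r → R) (a b : Fin n) :
    f (transferProd α x a b) = transferProd (f ∘ α) (f ∘ x) a b := by
  have hmap : (transferProd α x).map f = transferProd (f ∘ α) (f ∘ x) := by
    rw [transferProd, ← RingHom.mapMatrix_apply, map_list_prod, List.map_ofFn, transferProd]
    congr 2
    ext j p q
    simp [transferMatrix, apply_ite f]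
  rw [← hmap, Matrix.map_apply]

section Telescoping

variable (α : Fin n → R) (x y : R)

theorem transferMatrix_apply_of_le {p q : Fin n} (h : p ≤ q) :
    transferMatrix α x p q = (∏ i ∈ Iio p, (x - α i)) * ∏ i ∈ Ioi q, (x - α i) := by
  rw [transferMatrix, Matrix.of_apply, if_pos h, ← prod_union]
  · congr 1
    ext i
    simp only [mem_filter, mem_univ, true_and, mem_union, mem_Iio, mem_Ioi, not_and_or, not_le]
  · exact disjoint_left.2 fun i hp hq => by simp only [mem_Iio, mem_Ioi] at hp hq; order

theorem transferMatrix_mul_apply (p s : Fin n) :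
    (transferMatrix α x * transferMatrix α y) p s =
      (∏ i ∈ Iio p, (x - α i)) * (∏ i ∈ Ioi s, (y - α i)) *
        ∑ q ∈ Icc p s, (∏ i ∈ Ioi q, (x - α i)) * ∏ i ∈ Iio q, (y - α i) := by
  rw [Matrix.mul_apply, mul_sum, ← sum_subset (subset_univ (Icc p s))]
  · refine sum_congr rfl fun q hq => ?_
    rw [mem_Icc] at hq
    rw [transferMatrix_apply_of_le _ _ hq.1, transferMatrix_apply_of_le _ _ hq.2]
    ring
  · intro q _ hq
    rw [mem_Icc, not_and_or, not_le, not_le] at hq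
    rcases hq with hq | hq <;> simp [transferMatrix, not_le.2 hq]

-- The telescoping potential for the sum in `transferMatrix_mul_apply`.
def switchProd (k : ℕ) : R := ∏ i : Fin n, if k ≤ (i : ℕ) then x - α i else y - α i

theorem sub_mul_prod_Ioi_mul_prod_Iio (q : Fin n) :
    (x - y) * ((∏ i ∈ Ioi q, (x - α i)) * ∏ i ∈ Iio q, (y - α i)) =
      switchProd α x y q - switchProd α x y (q + 1) := by
  have erase_q : ∀ k : ℕ, k = q ∨ k = q + 1 →
      ∏ i ∈ univ.erase q, (if k ≤ (i : ℕ) then x - α i else y - α i) =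
        (∏ i ∈ Ioi q, (x - α i)) * ∏ i ∈ Iio q, (y - α i) := by
    intro k hk
    have hIoi : (univ.erase q).filter (fun i : Fin n => k ≤ (i : ℕ)) = Ioi q := by
      ext i
      simp only [mem_filter, mem_erase, mem_univ, and_true, mem_Ioi, Fin.lt_def, ne_eq,
        Fin.ext_iff]
      omega
    have hIio : (univ.erase q).filter (fun i : Fin n => ¬k ≤ (i : ℕ)) = Iio q := by
      ext i
      simp only [mem_filter, mem_erase, mem_univ, and_true, mem_Iio, Fin.lt_def, ne_eq,
        Fin.ext_iff]
      omega
    rw [prod_ite, hIoi, hIio]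
  rw [switchProd, switchProd, ← mul_prod_erase univ _ (mem_univ q), erase_q _ (.inl rfl),
    ← mul_prod_erase univ _ (mem_univ q), erase_q _ (.inr rfl), if_pos le_rfl,
    if_neg (by omega)]
  ring

theorem sub_mul_sum_Icc_prod_Ioi_mul_prod_Iio {p s : Fin n} (h : p ≤ s) :
    (x - y) * ∑ q ∈ Icc p s, (∏ i ∈ Ioi q, (x - α i)) * ∏ i ∈ Iio q, (y - α i) =
      switchProd α x y p - switchProd α x y (s + 1) := by
  rw [mul_sum]
  simp only [sub_mul_prod_Ioi_mul_prod_Iio]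
  rw [← neg_sub, ← sum_Icc_sub (Fin.le_iff_val_le_val.1 h), ← Fin.map_valEmbedding_Icc, sum_map,
    ← sum_neg_distrib]
  simp

theorem prod_Iio_mul_switchProd (p : Fin n) :
    (∏ i ∈ Iio p, (x - α i)) * switchProd α x y p =
      (∏ i, (x - α i)) * ∏ i ∈ Iio p, (y - α i) := by
  rw [switchProd, ← Fintype.prod_ite_mem (Iio p) (fun i => x - α i),
    ← Fintype.prod_ite_mem (Iio p) (fun i => y - α i), ← prod_mul_distrib,
    ← prod_mul_distrib]
  refine prod_congr rfl fun i _ => ?_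
  simp only [mem_Iio, Fin.lt_def]
  split_ifs <;> first | omega | ring

theorem prod_Ioi_mul_switchProd_succ (s : Fin n) :
    (∏ i ∈ Ioi s, (y - α i)) * switchProd α x y (s + 1) =
      (∏ i, (y - α i)) * ∏ i ∈ Ioi s, (x - α i) := by
  rw [switchProd, ← Fintype.prod_ite_mem (Ioi s) (fun i => x - α i),
    ← Fintype.prod_ite_mem (Ioi s) (fun i => y - α i), ← prod_mul_distrib,
    ← prod_mul_distrib]
  refine prod_congr rfl fun i _ => ?_
  simp only [mem_Ioi, Fin.lt_def]
  split_ifs <;> first | omega | ring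

end Telescoping

theorem smul_transferMatrix_mul_transferMatrix_eq_zero {α : Fin n → R} {x y : R}
    (hx : ∏ i, (x - α i) = 0) (hy : ∏ i, (y - α i) = 0) :
    (x - y) • (transferMatrix α x * transferMatrix α y) = 0 := by
  ext p s
  rw [Matrix.smul_apply, transferMatrix_mul_apply, Matrix.zero_apply, smul_eq_mul]
  rcases le_or_gt p s with hps | hsp
  · calc (x - y) * ((∏ i ∈ Iio p, (x - α i)) * (∏ i ∈ Ioi s, (y - α i)) *
          ∑ q ∈ Icc p s, (∏ i ∈ Ioi q, (x - α i)) * ∏ i ∈ Iio q, (y - α i))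
        = (∏ i ∈ Ioi s, (y - α i)) * ((∏ i ∈ Iio p, (x - α i)) * switchProd α x y p)
            - (∏ i ∈ Iio p, (x - α i)) *
              ((∏ i ∈ Ioi s, (y - α i)) * switchProd α x y (s + 1)) := by
          rw [mul_left_comm, sub_mul_sum_Icc_prod_Ioi_mul_prod_Iio α x y hps]
          ring
      _ = 0 := by
          rw [prod_Iio_mul_switchProd, prod_Ioi_mul_switchProd_succ, hx, hy]
          ring
  · rw [Icc_eq_empty_of_lt hsp, sum_empty, mul_zero, mul_zero]

section Shift

variable (α : Fin (n + 1) → R) (x : R)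

theorem transferMatrix_succ_zero (p : Fin n) : transferMatrix α x p.succ 0 = 0 := by
  rw [transferMatrix, Matrix.of_apply, if_neg (Fin.succ_pos p).not_ge]

theorem transferMatrix_succ_succ (p q : Fin n) :
    transferMatrix α x p.succ q.succ = (x - α 0) * transferMatrix (Fin.tail α) x p q := by
  simp only [transferMatrix, Matrix.of_apply, Fin.succ_le_succ_iff]
  split_ifs
  · simp [prod_filter, Fin.prod_univ_succ, Fin.succ_le_succ_iff, (Fin.succ_pos p).not_ge, Fin.tail]
  · rw [mul_zero]

theorem sub_mul_transferMatrix_zero_zero :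
    (x - α 0) * transferMatrix α x 0 0 = ∏ i, (x - α i) := by
  simp [transferMatrix, prod_filter, Fin.prod_univ_succ, Fin.succ_pos]

theorem transferMatrix_zero_succ (α : Fin (n + 2) → R) (q : Fin (n + 1)) :
    transferMatrix α x 0 q.succ = transferMatrix (Fin.tail α) x 0 q := by
  simp [transferMatrix, prod_filter, Fin.prod_univ_succ, Fin.tail]

end Shift

section ShiftProd

variable {r : ℕ} (α : Fin (n + 1) → R) (x : Fin r → R)

theorem transferProd_succ_zero (p : Fin n) : transferProd α x p.succ 0 = 0 := by
  induction r generalizing p with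
  | zero => simp [transferProd, Fin.succ_ne_zero]
  | succ r ih =>
    rw [transferProd_succ, Matrix.mul_apply, Fin.sum_univ_succ, transferMatrix_succ_zero,
      zero_mul, zero_add]
    exact sum_eq_zero fun k _ => by rw [ih, mul_zero]

theorem transferProd_succ_succ (p q : Fin n) :
    transferProd α x p.succ q.succ =
      (∏ j, (x j - α 0)) * transferProd (Fin.tail α) x p q := by
  induction r generalizing p with
  | zero => simp [transferProd, Matrix.one_apply]
  | succ r ih =>
    rw [transferProd_succ, transferProd_succ, Matrix.mul_apply, Matrix.mul_apply,
      Fin.sum_univ_succ, transferMatrix_succ_zero, zero_mul, zero_add, Fin.prod_univ_succ, mul_sum]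
    refine sum_congr rfl fun k _ => ?_
    rw [transferMatrix_succ_succ, ih]
    simp only [Fin.tail]
    ring

end ShiftProd

section Vanishing

variable {r : ℕ} {x : Fin (r + 1) → R}

theorem smul_transferProd_eq_zero {α : Fin n → R} (hx : ∀ j, ∏ i, (x j - α i) = 0)
    (l : Fin (r + 1)) : (x l - x 0) • transferProd α x = 0 := by
  induction r with
  | zero => rw [Fin.fin_one_eq_zero l, sub_self, zero_smul]
  | succ r ih =>
    induction l using Fin.cases with
    | zero => rw [sub_self, zero_smul]
    | succ l =>
      have htail : (x l.succ - Fin.tail x 0) • transferProd α (Fin.tail x) = 0 :=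
        ih (fun j => hx j.succ) l
      have hpair : (x 0 - Fin.tail x 0) •
          (transferMatrix α (x 0) * transferMatrix α (Fin.tail x 0)) = 0 :=
        smul_transferMatrix_mul_transferMatrix_eq_zero (hx 0) (hx 1)
      rw [← sub_add_sub_cancel _ (Fin.tail x 0), add_smul, transferProd_succ, ← Matrix.mul_smul,
        htail, Matrix.mul_zero, zero_add, transferProd_succ (x := Fin.tail x), ← Matrix.mul_assoc,
        ← Matrix.smul_mul, ← neg_sub, neg_smul, hpair, neg_zero, Matrix.zero_mul]

theorem sub_mul_transferProd_apply {α : Fin n → R} (hx : ∀ j, ∏ i, (x j - α i) = 0)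
    (l : Fin (r + 1)) (c : R) (a b : Fin n) :
    (x l - c) * transferProd α x a b = (x 0 - c) * transferProd α x a b := by
  have h := congr_fun (congr_fun (smul_transferProd_eq_zero hx l) a) b
  rw [Matrix.smul_apply, smul_eq_mul, Matrix.zero_apply] at h
  linear_combination h

theorem sub_mul_transferProd_zero_zero {α : Fin (n + 1) → R} (hx : ∀ j, ∏ i, (x j - α i) = 0)
    (l : Fin (r + 1)) : (x l - α 0) * transferProd α x 0 0 = 0 := by
  rw [sub_mul_transferProd_apply hx l, transferProd_succ, Matrix.mul_apply, mul_sum,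
    Fin.sum_univ_succ, ← mul_assoc, sub_mul_transferMatrix_zero_zero, hx 0, zero_mul, zero_add]
  exact sum_eq_zero fun k _ => by rw [transferProd_succ_zero, mul_zero, mul_zero]

theorem sub_mul_transferProd_zero_succ {α : Fin (n + 2) → R} (hx : ∀ j, ∏ i, (x j - α i) = 0)
    (l : Fin (r + 1)) (q : Fin (n + 1)) :
    (x l - α 0) * transferProd α x 0 q.succ =
      (∏ j, (x j - α 0)) * transferProd (Fin.tail α) x 0 q := by
  rw [sub_mul_transferProd_apply hx l, transferProd_succ, transferProd_succ (Fin.tail α),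
    Matrix.mul_apply, Matrix.mul_apply, mul_sum, mul_sum, Fin.sum_univ_succ, ← mul_assoc,
    sub_mul_transferMatrix_zero_zero, hx 0, zero_mul, zero_add]
  refine sum_congr rfl fun k _ => ?_
  rw [transferMatrix_zero_succ, transferProd_succ_succ, Fin.prod_univ_succ]
  simp only [Fin.tail]
  ring

end Vanishing

end TransferMatrix

theorem fa_zero (F : Type*) [CommRing F] (r : ℕ) (α : Fin 0 → F) : fa F r 0 α = 0 := by
  simp [fa]

theorem fa_eq_transferProd (F : Type*) [CommRing F] (r n : ℕ) (α : Fin (n + 1) → F) :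
    fa F r (n + 1) α = transferProd (fun i => C (α i)) X 0 (Fin.last n) := by
  rw [fa, transferProd, Matrix.list_prod_ofFn_apply]
  simp only [transferMatrix, Matrix.of_apply, Fintype.prod_ite_zero]
  rw [sum_filter, sum_filter]
  refine sum_congr rfl fun c _ => ?_
  simp only [← ite_and]
  congr 1
  rw [eq_iff_iff, ← Fin.monotone_iff_le_succ, Fin.ext_iff, Fin.ext_iff, Fin.val_last,
    Fin.val_zero, Nat.add_sub_cancel]
  exact ⟨fun ⟨hc, h0, hl⟩ => ⟨⟨h0, hl⟩, fun i j hij => hc i j hij⟩,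
    fun ⟨⟨h0, hl⟩, hc⟩ => ⟨fun i j hij => hc hij, h0, hl⟩⟩

theorem fa_congruence_quotient_root (F : Type*) [Field F] (r n : ℕ)
    (hn : 1 ≤ n) (α : Fin n → F) (l : Fin r) :
    (MvPolynomial.X l - MvPolynomial.C (α ⟨0, by omega⟩)) * fa F r n α
      - (∏ j : Fin r, (MvPolynomial.X j - MvPolynomial.C (α ⟨0, by omega⟩)))
        * fa F r (n - 1) (fun i => α ⟨(i : ℕ) + 1, by have := i.isLt; omega⟩) ∈
      Ideal.span (Set.range fun j : Fin r =>
        ∏ i, (MvPolynomial.X j - MvPolynomial.C (α i))) := by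
  obtain ⟨n, rfl⟩ := Nat.exists_eq_add_of_le' hn
  obtain ⟨r, rfl⟩ := Nat.exists_eq_succ_of_ne_zero l.pos.ne'
  set I := Ideal.span (Set.range fun j : Fin (r + 1) => ∏ i, (X j - C (α i)))
  have hroots : ∀ j, ∏ i, (Ideal.Quotient.mk I (X j) - Ideal.Quotient.mk I (C (α i))) = 0 := by
    intro j
    simp only [← map_sub, ← map_prod]
    exact Ideal.Quotient.eq_zero_iff_mem.2 (Ideal.subset_span ⟨j, rfl⟩)
  rw [← Ideal.Quotient.eq_zero_iff_mem]
  simp only [map_sub, map_mul, map_prod]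
  rw [sub_eq_zero, fa_eq_transferProd, map_transferProd_apply]
  cases n with
  | zero =>
    rw [fa_zero, map_zero, mul_zero]
    exact sub_mul_transferProd_zero_zero hroots l
  | succ n =>
    erw [fa_eq_transferProd, map_transferProd_apply]
    exact sub_mul_transferProd_zero_succ hroots l (Fin.last n)
end

section
/- Let a = Σ_{i=0}^n a_i T^i be a monic polynomial of degree n ≥ 1 over a field F, with roots α_1,…,α_n in an algebraic closure. For the case r = 2, the polynomial f_a satisfies f_a(T_1, T_2) = Σ_{i=1}^n a_i Σ_{j=1}^i T_1^{j-1} T_2^{i-j}. -/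
open Finset

theorem sub_mul_sum_prod_lt_mul_prod_gt {ι R : Type*} [CommRing R] [LinearOrder ι]
    (s : Finset ι) (α : ι → R) (x y : R) :
    (x - y) * ∑ k ∈ s, (∏ i ∈ s with k < i, (x - α i)) * ∏ i ∈ s with i < k, (y - α i) =
      ∏ i ∈ s, (x - α i) - ∏ i ∈ s, (y - α i) := by
  have hprod := prod_sub_ordered s (fun i => x - α i) (fun _ => x - y)
  simp only [sub_sub_sub_cancel_left] at hprod
  rw [hprod, sub_sub_cancel, mul_sum]
  exact sum_congr rfl fun k _ => by ring

theorem sub_mul_sum_Icc_pow_mul_pow {R : Type*} [CommRing R] (x y : R) (i : ℕ) :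
    (x - y) * ∑ j ∈ Icc 1 i, x ^ (j - 1) * y ^ (i - j) = x ^ i - y ^ i := by
  rw [← Ico_add_one_right_eq_Icc, sum_Ico_eq_sum_range, mul_comm, ← geom_sum₂_mul]
  refine congrArg (· * _) (sum_congr rfl fun j _ => ?_)
  simp [Nat.sub_sub, add_comm]

open Polynomial in
theorem aeval_sub_aeval_eq_sub_mul {R A : Type*} [CommRing R] [CommRing A] [Algebra R A]
    {p : R[X]} {n : ℕ} (hp : p.natDegree ≤ n) (x y : A) :
    aeval x p - aeval y p = (x - y) * ∑ i ∈ Icc 1 n,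
      algebraMap R A (p.coeff i) * ∑ j ∈ Icc 1 i, x ^ (j - 1) * y ^ (i - j) := by
  rw [aeval_eq_sum_range' (Nat.lt_succ_of_le hp), aeval_eq_sum_range' (Nat.lt_succ_of_le hp),
    ← sum_sub_distrib, sum_range_succ', mul_sum, ← Ico_add_one_right_eq_Icc,
    sum_Ico_eq_sum_range, add_tsub_cancel_right]
  simp only [mul_left_comm (x - y), sub_mul_sum_Icc_pow_mul_pow, Algebra.smul_def, add_comm 1]
  simp [mul_sub]

open MvPolynomial

theorem fa_two_eq_sum {R : Type*} [CommRing R] (n : ℕ) (α : Fin n → R) :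
    fa R 2 n α = ∑ k : Fin n,
      (∏ i with k < i, (X 0 - C (α i))) * ∏ i with i < k, (X 1 - C (α i)) := by
  unfold fa
  refine sum_nbij' (fun c => c 1)
    (fun k => ![⟨0, k.pos⟩, k, ⟨n - 1, by have := k.isLt; omega⟩]) (by simp) ?_ ?_ (by simp) ?_
  · intro k _
    simp only [mem_filter, mem_univ, true_and]
    refine ⟨Fin.monotone_iff_le_succ.2 fun i => ?_, rfl, rfl⟩
    fin_cases i <;> simp [Fin.le_def]
    omega
  · rintro c hc
    simp only [mem_filter, mem_univ, true_and] at hc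
    obtain ⟨-, h0, hlast⟩ := hc
    funext i
    fin_cases i <;> ext <;> simp_all
  · rintro c hc
    simp only [mem_filter, mem_univ, true_and] at hc
    obtain ⟨-, h0, hlast⟩ := hc
    have hc0 : ∀ i, c 0 ≤ i := fun i => Fin.le_def.2 (by omega)
    have hc2 : ∀ i, i ≤ c 2 := fun i => Fin.le_def.2 (by simp [Fin.last] at hlast; omega)
    rw [Fin.prod_univ_two]
    congr 2 <;> ext i <;> simp [hc0, hc2]

theorem fa_rank_two_general (F : Type*) [Field F] (n : ℕ) (α : Fin n → F)
    (a : Polynomial F) (ha : a = ∏ i, (Polynomial.X - Polynomial.C (α i))) :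
    fa F 2 n α = ∑ i ∈ Finset.Icc 1 n, MvPolynomial.C (a.coeff i) *
      ∑ j ∈ Finset.Icc 1 i,
        MvPolynomial.X (0 : Fin 2) ^ (j - 1) * MvPolynomial.X (1 : Fin 2) ^ (i - j) := by
  have hX : (X 0 - X 1 : MvPolynomial (Fin 2) F) ≠ 0 := sub_ne_zero.2 (X_injective.ne (by decide))
  have hdeg : a.natDegree ≤ n := by simp [ha, Polynomial.natDegree_finsetProd_X_sub_C_eq_card]
  have hrhs := aeval_sub_aeval_eq_sub_mul hdeg (X 0 : MvPolynomial (Fin 2) F) (X 1)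
  rw [algebraMap_eq] at hrhs
  refine mul_left_cancel₀ hX ?_
  rw [fa_two_eq_sum, sub_mul_sum_prod_lt_mul_prod_gt, ← hrhs]
  simp [ha]

theorem fa_rank_two (F : Type*) [Field F] (n : ℕ) (hn : 1 ≤ n) (α : Fin n → F)
    (a : Polynomial F) (ha : a = ∏ i, (Polynomial.X - Polynomial.C (α i))) :
    fa F 2 n α = ∑ i ∈ Finset.Icc 1 n, MvPolynomial.C (a.coeff i) *
      ∑ j ∈ Finset.Icc 1 i,
        MvPolynomial.X (0 : Fin 2) ^ (j - 1) * MvPolynomial.X (1 : Fin 2) ^ (i - j) :=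
  fa_rank_two_general F n α a ha
end
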